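/- The absolute linear Harbourne constant for 8 lines equals −2: for every field K and every configuration 𝓛 of 8 mutually distinct lines in the projective plane over K, H_L(K,𝓛) ≥ −2, and there exists a configuration 𝓛 of 8 mutually distinct lines in the projective plane over ℂ with H_L(ℂ,𝓛) = −2 (for instance the Möbius–Kantor configuration with t_2 = 4, t_3 = 8). -/

import Mathlib

/-- Points of the projective plane over `K`. -/
abbrev PPoint (K : Type*) [Field K] := Projectivization K (Fin 3 → K)

/-- Lines of the projective plane over `K`: points of the projectivization of the dual space. -/
abbrev PLine (K : Type*) [Field K] := Projectivization K (Module.Dual K (Fin 3 → K))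

/-- A point lies on a line iff a representative functional of the line vanishes on a
representative vector of the point. -/
def OnLine {K : Type*} [Field K] (P : PPoint K) (L : PLine K) : Prop :=
  L.rep P.rep = 0

/-- The multiplicity of a point `P` with respect to a configuration `𝓛`:
the number of lines of `𝓛` passing through `P`. -/
noncomputable def mult {K : Type*} [Field K] (𝓛 : Finset (PLine K)) (P : PPoint K) : ℕ :=
  {L : PLine K | L ∈ 𝓛 ∧ OnLine P L}.ncard

/-- The singular points of a configuration: points lying on at least two of its lines. -/
def SingPts {K : Type*} [Field K] (𝓛 : Finset (PLine K)) : Set (PPoint K) :=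
  {P | 2 ≤ mult 𝓛 P}

/-- `tk 𝓛 k` is the number of points of multiplicity exactly `k` (used for `k ≥ 2`). -/
noncomputable def tk {K : Type*} [Field K] (𝓛 : Finset (PLine K)) (k : ℕ) : ℕ :=
  {P : PPoint K | mult 𝓛 P = k}.ncard

/-- The linear Harbourne constant of a configuration `𝓛` of lines:
`(d² − Σ_P m_𝓛(P)²)/s` where the sum runs over the `s` singular points of `𝓛`. -/
noncomputable def HL {K : Type*} [Field K] (𝓛 : Finset (PLine K)) : ℚ :=
  ((𝓛.card : ℚ) ^ 2 - ∑ᶠ P ∈ SingPts 𝓛, (mult 𝓛 P : ℚ) ^ 2) / ((SingPts 𝓛).ncard : ℚ)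

/-!
Every ordered pair of distinct lines meets in exactly one singular point, so
`∑ m_P (m_P - 1) = d (d - 1)` and hence `H_L = (d - ∑ m_P) / s`. For `d = 8` the bound
`H_L ≥ -2` thus reads `∑ m_P ≤ 8 + 2 s`. If it failed, `∑ (m_P - 3) (m_P - 4) ≤ 2`, so every
singular point is triple or quadruple except at most one, which is double or quintuple. Now the
lines through a point `Q` off a line `a` cut `a` in `m_Q` distinct singular points, while
`∑_{P ∈ a} (m_P - 1) = 7`; so if all points of `a` are at least triple, `m_Q ≤ 3`. A line avoiding
the quintuple point contradicts this, and otherwise so does a line avoiding the double point and a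
quadruple point, which exists because `7` is odd.

The example is the Möbius–Kantor configuration over `ℚ(√-3)`; its incidences are computed in
`ℤ[√-3]`, and the count `4 · 2 + 8 · 6 = 56` shows that it has no further singular points.
-/

open Projectivization Finset
open scoped LinearAlgebra.Projectivization

theorem Projectivization.eq_cross_of_orthogonal {F : Type*} [Field F] [DecidableEq F]
    {u v w : ℙ F (Fin 3 → F)} (hvw : v ≠ w) (hv : u.orthogonal v) (hw : u.orthogonal w) :
    u = cross v w := by
  induction u with | h u hu => induction v with | h v hv' => induction w with | h w hw' =>
  rw [orthogonal_mk] at hv hw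
  rw [cross_mk_of_ne hv' hw' hvw, mk_eq_mk_iff_crossProduct_eq_zero,
    cross_cross_eq_smul_sub_smul', hw, dotProduct_comm, hv, zero_smul, zero_smul, sub_zero]

section Geometry

variable {K : Type*} [Field K]

noncomputable def coeffPoint (L : PLine K) : PPoint K :=
  map (dotProductEquiv K (Fin 3)).symm.toLinearMap (dotProductEquiv K (Fin 3)).symm.injective L

theorem coeffPoint_injective : Function.Injective (coeffPoint (K := K)) :=
  map_injective _ (dotProductEquiv K (Fin 3)).symm.injective

theorem onLine_iff_orthogonal {P : PPoint K} {L : PLine K} :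
    OnLine P L ↔ (coeffPoint L).orthogonal P := by
  rw [coeffPoint, ← L.mk_rep, ← P.mk_rep, map_mk, orthogonal_mk, mk_rep, mk_rep]
  simp [OnLine, ← dotProductEquiv_apply_apply]

theorem onLine_mk_dotProductEquiv {a v : Fin 3 → K} (ha : dotProductEquiv K (Fin 3) a ≠ 0)
    (hv : v ≠ 0) : OnLine (mk K v hv) (mk K (dotProductEquiv K (Fin 3) a) ha) ↔ a ⬝ᵥ v = 0 := by
  rw [onLine_iff_orthogonal, coeffPoint, map_mk]
  simp [orthogonal_mk]

open scoped Classical in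
/-- For `L = L'` this is a junk value. -/
noncomputable def meet (L L' : PLine K) : PPoint K :=
  cross (coeffPoint L) (coeffPoint L')

theorem onLine_meet_left {L L' : PLine K} (h : L ≠ L') : OnLine (meet L L') L := by
  classical
  rw [onLine_iff_orthogonal, meet]
  convert orthogonal_cross_left (coeffPoint_injective.ne h)

theorem onLine_meet_right {L L' : PLine K} (h : L ≠ L') : OnLine (meet L L') L' := by
  classical
  rw [onLine_iff_orthogonal, meet]
  convert orthogonal_cross_right (coeffPoint_injective.ne h)

theorem eq_of_onLine_of_onLine {L L' : PLine K} (h : L ≠ L') {P Q : PPoint K}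
    (hPL : OnLine P L) (hPL' : OnLine P L') (hQL : OnLine Q L) (hQL' : OnLine Q L') : P = Q := by
  classical
  by_contra hPQ
  rw [onLine_iff_orthogonal] at hPL hPL' hQL hQL'
  exact h <| coeffPoint_injective <| (eq_cross_of_orthogonal hPQ hPL hQL).trans
    (eq_cross_of_orthogonal hPQ hPL' hQL').symm

theorem meet_eq_iff {L L' : PLine K} (h : L ≠ L') {P : PPoint K} :
    meet L L' = P ↔ OnLine P L ∧ OnLine P L' :=
  ⟨by rintro rfl; exact ⟨onLine_meet_left h, onLine_meet_right h⟩,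
    fun ⟨hL, hL'⟩ => eq_of_onLine_of_onLine h (onLine_meet_left h) (onLine_meet_right h) hL hL'⟩

end Geometry

section Counting

variable {K : Type*} [Field K] {𝓛 : Finset (PLine K)}

open scoped Classical

noncomputable def linesThrough (𝓛 : Finset (PLine K)) (P : PPoint K) : Finset (PLine K) :=
  {L ∈ 𝓛 | OnLine P L}

theorem mem_linesThrough {P : PPoint K} {L : PLine K} :
    L ∈ linesThrough 𝓛 P ↔ L ∈ 𝓛 ∧ OnLine P L := by
  simp [linesThrough]

theorem mult_eq_card_linesThrough (𝓛 : Finset (PLine K)) (P : PPoint K) :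
    mult 𝓛 P = #(linesThrough 𝓛 P) := by
  rw [mult, ← Set.ncard_coe_finset]
  congr 1
  ext L
  simp [mem_linesThrough]

theorem two_le_mult_meet {L L' : PLine K} (hL : L ∈ 𝓛) (hL' : L' ∈ 𝓛) (h : L ≠ L') :
    2 ≤ mult 𝓛 (meet L L') := by
  rw [mult_eq_card_linesThrough, ← card_pair h]
  exact card_le_card <| insert_subset (mem_linesThrough.2 ⟨hL, onLine_meet_left h⟩) <|
    singleton_subset_iff.2 (mem_linesThrough.2 ⟨hL', onLine_meet_right h⟩)

theorem exists_meet_eq_of_two_le_mult {P : PPoint K} (hP : 2 ≤ mult 𝓛 P) :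
    ∃ L ∈ 𝓛, ∃ L' ∈ 𝓛, L ≠ L' ∧ meet L L' = P := by
  rw [mult_eq_card_linesThrough] at hP
  obtain ⟨L, hL, L', hL', h⟩ := one_lt_card.1 hP
  rw [mem_linesThrough] at hL hL'
  exact ⟨L, hL.1, L', hL'.1, h, (meet_eq_iff h).2 ⟨hL.2, hL'.2⟩⟩

theorem singPts_finite (𝓛 : Finset (PLine K)) : (SingPts 𝓛).Finite := by
  refine ((𝓛 ×ˢ 𝓛).finite_toSet.image fun p => meet p.1 p.2).subset fun P hP => ?_
  obtain ⟨L, hL, L', hL', -, rfl⟩ := exists_meet_eq_of_two_le_mult hP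
  exact ⟨(L, L'), mem_product.2 ⟨hL, hL'⟩, rfl⟩

noncomputable def sing (𝓛 : Finset (PLine K)) : Finset (PPoint K) :=
  (singPts_finite 𝓛).toFinset

theorem mem_sing {P : PPoint K} : P ∈ sing 𝓛 ↔ 2 ≤ mult 𝓛 P := by
  simp [sing, SingPts]

theorem coe_sing (𝓛 : Finset (PLine K)) : (sing 𝓛 : Set (PPoint K)) = SingPts 𝓛 :=
  (singPts_finite 𝓛).coe_toFinset

theorem sing_nonempty (h : 2 ≤ #𝓛) : (sing 𝓛).Nonempty := by
  obtain ⟨L, hL, L', hL', h⟩ := one_lt_card.1 h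
  exact ⟨meet L L', mem_sing.2 (two_le_mult_meet hL hL' h)⟩

/-- Each ordered pair of distinct lines meets in exactly one singular point. -/
theorem sum_sing_mult_mul_mult_sub_one (𝓛 : Finset (PLine K)) :
    ∑ P ∈ sing 𝓛, mult 𝓛 P * (mult 𝓛 P - 1) = #𝓛 * (#𝓛 - 1) := by
  rw [Nat.mul_sub_one, ← offDiag_card, card_eq_sum_card_fiberwise (t := sing 𝓛)
    (f := fun p => meet p.1 p.2) fun p hp => by
      obtain ⟨hL, hL', h⟩ := mem_offDiag.1 hp
      exact mem_sing.2 (two_le_mult_meet hL hL' h)]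
  refine sum_congr rfl fun P _ => ?_
  rw [mult_eq_card_linesThrough, Nat.mul_sub_one, ← offDiag_card]
  congr 1
  symm
  ext ⟨L, L'⟩
  simp only [mem_filter, mem_offDiag, mem_linesThrough]
  by_cases h : L = L'
  · simp [h]
  · rw [meet_eq_iff h]
    tauto

/-- Every other line of `𝓛` meets `L` in exactly one singular point. -/
theorem sum_sing_onLine_mult_sub_one {L : PLine K} (hL : L ∈ 𝓛) :
    ∑ P ∈ sing 𝓛 with OnLine P L, (mult 𝓛 P - 1) = #𝓛 - 1 := by
  rw [← card_erase_of_mem hL, card_eq_sum_card_fiberwise (t := {P ∈ sing 𝓛 | OnLine P L})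
    (f := meet L) fun L' hL' => by
      obtain ⟨h, hL'⟩ := mem_erase.1 hL'
      exact mem_filter.2 ⟨mem_sing.2 (two_le_mult_meet hL hL' h.symm), onLine_meet_left h.symm⟩]
  refine sum_congr rfl fun P hP => ?_
  rw [mult_eq_card_linesThrough, ← card_erase_of_mem (mem_linesThrough.2 ⟨hL, (mem_filter.1 hP).2⟩)]
  congr 1
  symm
  ext L'
  simp only [mem_filter, mem_erase, mem_linesThrough]
  by_cases h : L' = L
  · simp [h]
  · rw [meet_eq_iff (Ne.symm h)]
    have := (mem_filter.1 hP).2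
    tauto

/-- The lines through `Q` meet `a` in distinct singular points. -/
theorem mult_le_card_sing_onLine {a : PLine K} (ha : a ∈ 𝓛) {Q : PPoint K} (hQ : ¬ OnLine Q a) :
    mult 𝓛 Q ≤ #{P ∈ sing 𝓛 | OnLine P a} := by
  have hne {L : PLine K} (hL : L ∈ linesThrough 𝓛 Q) : a ≠ L := by
    rintro rfl
    exact hQ (mem_linesThrough.1 hL).2
  rw [mult_eq_card_linesThrough]
  refine card_le_card_of_injOn (meet a) (fun L hL => ?_) fun L hL L' hL' h => ?_
  · exact mem_filter.2 ⟨mem_sing.2 (two_le_mult_meet ha (mem_linesThrough.1 hL).1 (hne hL)),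
      onLine_meet_left (hne hL)⟩
  · by_contra hLL'
    refine hQ ?_
    have := eq_of_onLine_of_onLine hLL' (mem_linesThrough.1 hL).2 (mem_linesThrough.1 hL').2
      (onLine_meet_right (hne hL)) (h ▸ onLine_meet_right (hne hL'))
    exact this ▸ onLine_meet_left (hne hL)

theorem exists_mem_forall_not_onLine (𝓛 : Finset (PLine K)) (T : Finset (PPoint K))
    (hT : ∑ P ∈ T, mult 𝓛 P < #𝓛) : ∃ a ∈ 𝓛, ∀ P ∈ T, ¬ OnLine P a := by
  by_contra! h
  refine hT.not_ge ?_
  calc #𝓛 ≤ #(T.biUnion (linesThrough 𝓛)) := card_le_card fun L hL => by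
        obtain ⟨P, hP, hPL⟩ := h L hL
        exact mem_biUnion.2 ⟨P, hP, mem_linesThrough.2 ⟨hL, hPL⟩⟩
    _ ≤ ∑ P ∈ T, #(linesThrough 𝓛 P) := card_biUnion_le
    _ = ∑ P ∈ T, mult 𝓛 P := by simp [mult_eq_card_linesThrough]

theorem HL_eq (𝓛 : Finset (PLine K)) :
    HL 𝓛 = ((#𝓛 : ℚ) - ∑ P ∈ sing 𝓛, (mult 𝓛 P : ℚ)) / #(sing 𝓛) := by
  have hsq (n : ℕ) : n ^ 2 = n * (n - 1) + n := by cases n <;> simp; ring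
  have hsum : ∑ P ∈ sing 𝓛, mult 𝓛 P ^ 2 + #𝓛 = #𝓛 ^ 2 + ∑ P ∈ sing 𝓛, mult 𝓛 P := by
    simp only [hsq, sum_add_distrib, sum_sing_mult_mul_mult_sub_one]
    ring
  rw [HL, ← coe_sing, finsum_mem_coe_finset, Set.ncard_coe_finset]
  congr 1
  have := congrArg (Nat.cast : ℕ → ℚ) hsum
  push_cast at this
  linarith

end Counting

section EightLines

variable {K : Type*} [Field K] {𝓛 : Finset (PLine K)}

open scoped Classical

/-- `∑ (m - 3) (m - 4) = 56 - 6 ∑ m + 12 #s ≤ 2`, and each summand is nonnegative and at least `2`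
unless `m ∈ {3, 4}`. -/
theorem eq_two_or_five_and_others_three_or_four {α : Type*} (s : Finset α) (m : α → ℕ)
    (h56 : ∑ x ∈ s, m x * (m x - 1) = 56) (hlarge : 9 + 2 * #s ≤ ∑ x ∈ s, m x)
    {x : α} (hx : x ∈ s) (hx3 : m x ≠ 3) (hx4 : m x ≠ 4) :
    (m x = 2 ∨ m x = 5) ∧ ∀ y ∈ s, y ≠ x → m y = 3 ∨ m y = 4 := by
  set g : α → ℤ := fun y => ((m y : ℤ) - 3) * (m y - 4)
  have hg_nonneg (y : α) : 0 ≤ g y := by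
    rcases le_or_gt (m y) 3 with h | h
    · have : (m y : ℤ) ≤ 3 := by exact_mod_cast h
      exact mul_nonneg_of_nonpos_of_nonpos (by linarith) (by linarith)
    · have : (4 : ℤ) ≤ m y := by exact_mod_cast h
      exact mul_nonneg (by linarith) (by linarith)
  have hg_large {y : α} (h : m y ≤ 1 ∨ 6 ≤ m y) : 6 ≤ g y := by
    rcases h with h | h
    · have : (m y : ℤ) ≤ 1 := by exact_mod_cast h
      nlinarith
    · have : (6 : ℤ) ≤ m y := by exact_mod_cast h
      nlinarith
  have hg_two {y : α} (h3 : m y ≠ 3) (h4 : m y ≠ 4) : 2 ≤ g y := by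
    rcases (by omega : m y = 2 ∨ m y = 5 ∨ m y ≤ 1 ∨ 6 ≤ m y) with h | h | h
    · simp [g, h]
    · simp [g, h]
    · linarith [hg_large h]
  have hsum : ∑ y ∈ s, g y ≤ 2 := by
    have hcast (n : ℕ) : ((n * (n - 1) : ℕ) : ℤ) = n * ((n : ℤ) - 1) := by
      cases n with
      | zero => simp
      | succ n => push_cast; ring
    have h56' : ∑ y ∈ s, (m y : ℤ) * (m y - 1) = 56 := by
      have := congrArg (Nat.cast : ℕ → ℤ) h56
      simp only [Nat.cast_sum, hcast, Nat.cast_ofNat] at this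
      exact this
    have hlarge' : (9 : ℤ) + 2 * #s ≤ ∑ y ∈ s, (m y : ℤ) := by exact_mod_cast hlarge
    have hexp : ∑ y ∈ s, g y
        = ∑ y ∈ s, (m y : ℤ) * (m y - 1) - 6 * ∑ y ∈ s, (m y : ℤ) + 12 * #s := by
      rw [card_eq_sum_ones, Nat.cast_sum, mul_sum, mul_sum, ← sum_sub_distrib,
        ← sum_add_distrib]
      exact sum_congr rfl fun y _ => by simp only [g]; push_cast; ring
    linarith
  refine ⟨?_, fun y hy hyx => ?_⟩
  · have hgx : g x ≤ 2 := (single_le_sum (fun y _ => hg_nonneg y) hx).trans hsum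
    by_contra h25
    linarith [hg_large (y := x) (by omega)]
  · by_contra! hy34
    have : g x + g y ≤ ∑ z ∈ s, g z := by
      rw [← sum_pair hyx.symm]
      exact sum_le_sum_of_subset_of_nonneg (insert_subset hx (singleton_subset_iff.2 hy))
        fun z _ _ => hg_nonneg z
    linarith [hg_two hx3 hx4, hg_two hy34.1 hy34.2]

theorem exists_even_mult_of_even_card {L : PLine K} (hL : L ∈ 𝓛) (h𝓛 : Even #𝓛) :
    ∃ P ∈ sing 𝓛, OnLine P L ∧ Even (mult 𝓛 P) := by
  by_contra! h
  have hpos : 0 < #𝓛 := card_pos.2 ⟨L, hL⟩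
  have heven : Even (∑ P ∈ sing 𝓛 with OnLine P L, (mult 𝓛 P - 1)) :=
    even_sum _ fun P hP => by
      obtain ⟨hP, hPL⟩ := mem_filter.1 hP
      exact Nat.Odd.sub_odd (Nat.not_even_iff_odd.1 (h P hP hPL)) odd_one
  rw [sum_sing_onLine_mult_sub_one hL, Nat.even_iff] at heven
  rw [Nat.even_iff] at h𝓛
  omega

theorem two_mul_mult_le_of_three_le_mult {a : PLine K} (ha : a ∈ 𝓛) {Q : PPoint K}
    (hQ : ¬ OnLine Q a) (h3 : ∀ P ∈ sing 𝓛, OnLine P a → 3 ≤ mult 𝓛 P) :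
    2 * mult 𝓛 Q ≤ #𝓛 - 1 := by
  rw [← sum_sing_onLine_mult_sub_one ha]
  calc 2 * mult 𝓛 Q ≤ 2 * #{P ∈ sing 𝓛 | OnLine P a} :=
        Nat.mul_le_mul_left 2 (mult_le_card_sing_onLine ha hQ)
    _ = ∑ P ∈ sing 𝓛 with OnLine P a, 2 := by rw [sum_const, smul_eq_mul, mul_comm]
    _ ≤ _ := sum_le_sum fun P hP => by
        have := h3 P (mem_filter.1 hP).1 (mem_filter.1 hP).2
        omega

theorem false_of_mult_eq_three_or_four (h8 : #𝓛 = 8) (X : Finset (PPoint K))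
    (hX : ∑ P ∈ X, mult 𝓛 P ≤ 2) (h34 : ∀ P ∈ sing 𝓛, P ∉ X → mult 𝓛 P = 3 ∨ mult 𝓛 P = 4) :
    False := by
  obtain ⟨ℓ, hℓ, hℓX⟩ := exists_mem_forall_not_onLine 𝓛 X (by omega)
  obtain ⟨Q, hQ, hQℓ, hQeven⟩ := exists_even_mult_of_even_card hℓ (by rw [h8]; decide)
  have hQX : Q ∉ X := fun h => hℓX Q h hQℓ
  have hQ4 : mult 𝓛 Q = 4 := by
    rcases h34 Q hQ hQX with h | h
    · rw [h] at hQeven; exact absurd hQeven (by decide)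
    · exact h
  obtain ⟨a, ha, haQX⟩ :=
    exists_mem_forall_not_onLine 𝓛 (insert Q X) (by rw [sum_insert hQX]; omega)
  have := two_mul_mult_le_of_three_le_mult ha (haQX Q (mem_insert_self Q X)) fun P hP hPa => by
    have := h34 P hP fun hPX => haQX P (mem_insert_of_mem hPX) hPa
    omega
  omega

theorem sum_mult_le_of_card_eq_eight (h8 : #𝓛 = 8) :
    ∑ P ∈ sing 𝓛, mult 𝓛 P ≤ 8 + 2 * #(sing 𝓛) := by
  by_contra! hlarge
  have h56 : ∑ P ∈ sing 𝓛, mult 𝓛 P * (mult 𝓛 P - 1) = 56 := by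
    rw [sum_sing_mult_mul_mult_sub_one, h8]
  by_cases h34 : ∀ P ∈ sing 𝓛, mult 𝓛 P = 3 ∨ mult 𝓛 P = 4
  · exact false_of_mult_eq_three_or_four h8 ∅ (by simp) fun P hP _ => h34 P hP
  obtain ⟨E, hE, hE3, hE4⟩ : ∃ E ∈ sing 𝓛, mult 𝓛 E ≠ 3 ∧ mult 𝓛 E ≠ 4 := by
    simpa [not_or] using h34
  obtain ⟨hE25, h34⟩ := eq_two_or_five_and_others_three_or_four _ _ h56 (by omega) hE hE3 hE4
  rcases hE25 with hE2 | hE5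
  · exact false_of_mult_eq_three_or_four h8 {E} (by simp [hE2]) fun P hP hPE =>
      h34 P hP (notMem_singleton.1 hPE)
  · obtain ⟨a, ha, haE⟩ := exists_mem_forall_not_onLine 𝓛 {E} (by simp [hE5, h8])
    have := two_mul_mult_le_of_three_le_mult ha (haE E (mem_singleton_self E))
      fun P hP hPa => by
        have := h34 P hP fun hPE => haE E (mem_singleton_self E) (hPE ▸ hPa)
        omega
    omega

theorem neg_two_le_HL (h8 : #𝓛 = 8) : -2 ≤ HL 𝓛 := by
  have hs : (0 : ℚ) < #(sing 𝓛) := by exact_mod_cast (sing_nonempty (by omega)).card_pos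
  have hbound : (∑ P ∈ sing 𝓛, mult 𝓛 P : ℚ) ≤ 8 + 2 * #(sing 𝓛) := by
    exact_mod_cast sum_mult_le_of_card_eq_eight h8
  rw [HL_eq, le_div_iff₀ hs, h8]
  push_cast
  linarith

end EightLines

section Enumeration

variable {K κ : Type*} [Field K] [Fintype κ] {𝓛 : Finset (PLine K)} {P : κ → PPoint K}

open scoped Classical

theorem eq_sing_of_subset_of_sum_eq {T : Finset (PPoint K)} (hT : T ⊆ sing 𝓛)
    (hsum : ∑ P ∈ T, mult 𝓛 P * (mult 𝓛 P - 1) = #𝓛 * (#𝓛 - 1)) : sing 𝓛 = T := by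
  refine (eq_of_subset_of_card_le hT (card_le_card fun Q hQ => ?_)).symm
  by_contra hQT
  have hpos : 0 < mult 𝓛 Q * (mult 𝓛 Q - 1) := by
    have := mem_sing.1 hQ
    exact Nat.mul_pos (by omega) (by omega)
  have hrest := sum_sdiff hT (f := fun P => mult 𝓛 P * (mult 𝓛 P - 1))
  rw [sum_sing_mult_mul_mult_sub_one, hsum] at hrest
  have := single_le_sum (f := fun P => mult 𝓛 P * (mult 𝓛 P - 1)) (fun _ _ => Nat.zero_le _)
    (mem_sdiff.2 ⟨hQ, hQT⟩)
  omega

theorem tk_eq_of_sing_eq_image (hP : Function.Injective P) (hsing : sing 𝓛 = univ.image P)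
    {m : ℕ} (hm : 2 ≤ m) : tk 𝓛 m = #{k | mult 𝓛 (P k) = m} := by
  have : {Q | mult 𝓛 Q = m} = (({k | mult 𝓛 (P k) = m} : Finset κ).image P : Set (PPoint K)) := by
    ext Q
    simp only [Set.mem_ofPred_eq, coe_image, coe_filter, mem_univ, true_and, Set.mem_image]
    constructor
    · intro hQ
      obtain ⟨k, -, rfl⟩ := mem_image.1 (hsing ▸ mem_sing.2 (hQ ▸ hm))
      exact ⟨k, hQ, rfl⟩
    · rintro ⟨k, hk, rfl⟩
      exact hk
  rw [tk, this, Set.ncard_coe_finset, card_image_of_injective _ hP]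

theorem HL_eq_of_sing_eq_image (hP : Function.Injective P) (hsing : sing 𝓛 = univ.image P) :
    HL 𝓛 = ((#𝓛 : ℚ) - ∑ k, (mult 𝓛 (P k) : ℚ)) / Fintype.card κ := by
  rw [HL_eq, hsing, sum_image hP.injOn, card_image_of_injective _ hP, card_univ]

end Enumeration

section Realization

variable {K ι κ : Type*} [Field K] {L : ι → PLine K} {P : κ → PPoint K} {I : κ → ι → Prop}

open scoped Classical

theorem injective_lines_of_incidence (hI : ∀ k i, OnLine (P k) (L i) ↔ I k i)
    (hcol : ∀ i j, (∀ k, I k i ↔ I k j) → i = j) : Function.Injective L :=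
  fun i j h => hcol i j fun k => by rw [← hI, ← hI, h]

theorem injective_points_of_incidence (hI : ∀ k i, OnLine (P k) (L i) ↔ I k i)
    (hrow : ∀ k k', (∀ i, I k i ↔ I k' i) → k = k') : Function.Injective P :=
  fun k k' h => hrow k k' fun i => by rw [← hI, ← hI, h]

theorem mult_image_of_incidence [Fintype ι] [DecidableRel I]
    (hI : ∀ k i, OnLine (P k) (L i) ↔ I k i) (hL : Function.Injective L) (k : κ) :
    mult (univ.image L) (P k) = #{i | I k i} := by
  rw [mult_eq_card_linesThrough, ← card_image_of_injective _ hL]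
  congr 1
  ext M
  simp only [mem_linesThrough, mem_image, mem_filter, mem_univ, true_and]
  grind

theorem sing_image_of_incidence [Fintype ι] [Fintype κ] [DecidableRel I]
    (hI : ∀ k i, OnLine (P k) (L i) ↔ I k i) (hL : Function.Injective L)
    (hP : Function.Injective P) (hr : ∀ k, 2 ≤ #{i | I k i})
    (hsum : ∑ k, #{i | I k i} * (#{i | I k i} - 1) = Fintype.card ι * (Fintype.card ι - 1)) :
    sing (univ.image L) = univ.image P := by
  refine eq_sing_of_subset_of_sum_eq (fun Q hQ => ?_) ?_
  · obtain ⟨k, -, rfl⟩ := mem_image.1 hQ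
    exact mem_sing.2 (mult_image_of_incidence hI hL k ▸ hr k)
  · rw [sum_image hP.injOn, card_image_of_injective _ hL, card_univ, ← hsum]
    simp only [mult_image_of_incidence hI hL]

end Realization

namespace MoebiusKantor

open scoped Classical

noncomputable def toComplex : ℤ√(-3) →+* ℂ :=
  Zsqrtd.lift ⟨Complex.I * Real.sqrt 3, by
    rw [mul_mul_mul_comm, Complex.I_mul_I, ← Complex.ofReal_mul,
      Real.mul_self_sqrt (by norm_num : (0 : ℝ) ≤ 3)]
    norm_num⟩

theorem toComplex_injective : Function.Injective toComplex :=
  Zsqrtd.lift_injective _ fun n h => by nlinarith [mul_self_nonneg n]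

theorem toComplex_comp_ne_zero {v : Fin 3 → ℤ√(-3)} (hv : v ≠ 0) : toComplex ∘ v ≠ 0 :=
  fun h => hv <| funext fun j => toComplex_injective <| by simpa using congrFun h j

/-- Coordinates in `ℤ[√-3]` (where `⟨a, b⟩ = a + b√-3` and `√-3 = 2ω + 1`) of the lines and
points of the configuration; the points `0, …, 7` are triple and `8, …, 11` double points. -/
def lineCoeffs : Fin 8 → Fin 3 → ℤ√(-3) :=
  ![![1, 0, 0], ![0, 1, 0], ![0, 0, 1], ![-1, -1, 0], ![0, ⟨1, -1⟩, 2], ![1, 1, 1],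
    ![⟨1, 1⟩, 2, 2], ![⟨1, 1⟩, 0, 2]]

def pointCoords : Fin 12 → Fin 3 → ℤ√(-3) :=
  ![![0, 0, 1], ![1, 0, 0], ![1, -1, 0], ![-2, 2, ⟨-1, 1⟩], ![⟨-1, -1⟩, 2, ⟨-1, 1⟩], ![0, -1, 1],
    ![2, 0, ⟨-1, -1⟩], ![0, -1, 0], ![0, -2, ⟨1, -1⟩], ![1, 0, -1], ![-2, ⟨1, 1⟩, 0],
    ![-2, 2, ⟨1, 1⟩]]

theorem lineCoeffs_ne_zero : ∀ i, lineCoeffs i ≠ 0 := by decide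

theorem pointCoords_ne_zero : ∀ k, pointCoords k ≠ 0 := by decide

noncomputable def line (i : Fin 8) : PLine ℂ :=
  mk ℂ (dotProductEquiv ℂ (Fin 3) (toComplex ∘ lineCoeffs i))
    ((LinearEquiv.map_ne_zero_iff _).2 (toComplex_comp_ne_zero (lineCoeffs_ne_zero i)))

noncomputable def point (k : Fin 12) : PPoint ℂ :=
  mk ℂ (toComplex ∘ pointCoords k) (toComplex_comp_ne_zero (pointCoords_ne_zero k))

theorem onLine_point_line (k : Fin 12) (i : Fin 8) :
    OnLine (point k) (line i) ↔ lineCoeffs i ⬝ᵥ pointCoords k = 0 := by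
  rw [point, line, onLine_mk_dotProductEquiv, ← RingHom.map_dotProduct,
    map_eq_zero_iff _ toComplex_injective]

theorem line_injective : Function.Injective line :=
  injective_lines_of_incidence onLine_point_line (by decide)

theorem point_injective : Function.Injective point :=
  injective_points_of_incidence onLine_point_line (by decide)

noncomputable def config : Finset (PLine ℂ) :=
  univ.image line

theorem card_config : #config = 8 :=
  card_image_of_injective _ line_injective

theorem mult_config_point (k : Fin 12) :
    mult config (point k) = #{i | lineCoeffs i ⬝ᵥ pointCoords k = 0} :=
  mult_image_of_incidence onLine_point_line line_injective k

theorem sing_config : sing config = univ.image point :=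
  sing_image_of_incidence onLine_point_line line_injective point_injective (by decide) (by decide)

theorem tk_config_two : tk config 2 = 4 := by
  rw [tk_eq_of_sing_eq_image point_injective sing_config le_rfl]
  simp only [mult_config_point]
  decide

theorem tk_config_three : tk config 3 = 8 := by
  rw [tk_eq_of_sing_eq_image point_injective sing_config (by norm_num)]
  simp only [mult_config_point]
  decide

theorem HL_config : HL config = -2 := by
  have h32 : ∑ k, #{i | lineCoeffs i ⬝ᵥ pointCoords k = 0} = 32 := by decide
  rw [HL_eq_of_sing_eq_image point_injective sing_config, card_config]
  simp only [mult_config_point]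
  rw [← Nat.cast_sum, h32]
  norm_num

end MoebiusKantor

/-- The absolute linear Harbourne constant for `8` lines equals `−2`, attained over `ℂ`
by the Möbius–Kantor configuration with `t₂ = 4`, `t₃ = 8`. -/
theorem HL_eight_lines :
    (∀ (K : Type*) [Field K] (𝓛 : Finset (PLine K)), 𝓛.card = 8 → -2 ≤ HL 𝓛) ∧
    (∃ 𝓛 : Finset (PLine ℂ), 𝓛.card = 8 ∧ tk 𝓛 2 = 4 ∧ tk 𝓛 3 = 8 ∧ HL 𝓛 = -2) :=
  ⟨fun _ _ _ h8 => neg_two_le_HL h8, ⟨MoebiusKantor.config, MoebiusKantor.card_config,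
    MoebiusKantor.tk_config_two, MoebiusKantor.tk_config_three, MoebiusKantor.HL_config⟩⟩
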